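/- Let m ∈ ℝ and c > 0. Define κ_s(v) = (1 + c·v)^(−1/2), p(v) = σ(κ_s(v)·m), and u(v) = H(p(v)) for v ≥ 0. Then u is monotone non-decreasing on [0, ∞); moreover, if m ≠ 0 then u is strictly increasing on [0, ∞). -/
import Mathlib

/-- The logistic sigmoid `σ(x) = 1 / (1 + exp (−x))`. -/
noncomputable def sigmoid (x : ℝ) : ℝ := 1 / (1 + Real.exp (-x))

/-- The binary (Bernoulli) entropy `H(p) = −p·log p − (1−p)·log(1−p)`. -/
noncomputable def binEntropy (p : ℝ) : ℝ :=
  -p * Real.log p - (1 - p) * Real.log (1 - p)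

lemma binEntropy_eq_real (p : ℝ) : binEntropy p = Real.binEntropy p := by
  simp [binEntropy, Real.binEntropy, Real.log_inv]; ring

lemma sigmoid_pos (x : ℝ) : 0 < sigmoid x := by
  have := Real.exp_pos (-x); unfold sigmoid; positivity

lemma sigmoid_lt_one (x : ℝ) : sigmoid x < 1 := by
  have h := Real.exp_pos (-x)
  rw [sigmoid, div_lt_one (by linarith)]; linarith

lemma sigmoid_strictMono : StrictMono sigmoid := by
  intro a b hab
  have ha := Real.exp_pos (-a)
  have hb := Real.exp_pos (-b)
  have : Real.exp (-b) < Real.exp (-a) := Real.exp_lt_exp.2 (by linarith)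
  unfold sigmoid
  apply div_lt_div_of_pos_left one_pos (by linarith) (by linarith)

lemma sigmoid_zero : sigmoid 0 = 1 / 2 := by norm_num [sigmoid]

lemma sigmoid_neg (x : ℝ) : sigmoid (-x) = 1 - sigmoid x := by
  have ha := Real.exp_pos (-x)
  have hb := Real.exp_pos x
  have hx : Real.exp x * Real.exp (-x) = 1 := by
    rw [← Real.exp_add]; simp
  unfold sigmoid
  rw [neg_neg]
  field_simp
  nlinarith

lemma g_strictAntiOn :
    StrictAntiOn (fun x : ℝ => binEntropy (sigmoid x)) (Set.Ici 0) := by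
  intro a ha b hb hab
  simp only [binEntropy_eq_real]
  have hsa : sigmoid a ∈ Set.Icc (2 : ℝ)⁻¹ 1 := by
    constructor
    · have := sigmoid_strictMono.monotone (show (0:ℝ) ≤ a from ha)
      rw [sigmoid_zero] at this; linarith
    · exact (sigmoid_lt_one a).le
  have hsb : sigmoid b ∈ Set.Icc (2 : ℝ)⁻¹ 1 := by
    constructor
    · have := sigmoid_strictMono.monotone (show (0:ℝ) ≤ b from hb)
      rw [sigmoid_zero] at this; linarith
    · exact (sigmoid_lt_one b).le
  exact Real.binEntropy_strictAntiOn hsa hsb (sigmoid_strictMono hab)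

lemma u_abs (x : ℝ) : binEntropy (sigmoid x) = binEntropy (sigmoid |x|) := by
  rcases abs_cases x with ⟨h, _⟩ | ⟨h, _⟩
  · rw [h]
  · rw [h, ← neg_neg x, sigmoid_neg, neg_neg, binEntropy_eq_real, binEntropy_eq_real,
      Real.binEntropy_one_sub]

/-- with `κ_s(v) = (1 + c·v)^(−1/2)`, `p(v) = σ(κ_s(v)·m)`,
`u(v) = H(p(v))`, the function `u` is monotone non-decreasing on `[0, ∞)`;
moreover if `m ≠ 0` it is strictly increasing on `[0, ∞)`. -/
theorem entropy_increases_with_variance (m c : ℝ) (hc : 0 < c) :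
    MonotoneOn
      (fun v : ℝ => binEntropy (sigmoid ((1 + c * v) ^ (-(1 : ℝ) / 2) * m)))
      (Set.Ici 0) ∧
    (m ≠ 0 →
      StrictMonoOn
        (fun v : ℝ => binEntropy (sigmoid ((1 + c * v) ^ (-(1 : ℝ) / 2) * m)))
        (Set.Ici 0)) := by
  have key : ∀ m ≠ 0, StrictMonoOn
      (fun v : ℝ => binEntropy (sigmoid ((1 + c * v) ^ (-(1 : ℝ) / 2) * m)))
      (Set.Ici 0) := by
    intro m hm a ha b hb hab
    have ha' : (0:ℝ) ≤ a := ha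
    have hb' : (0:ℝ) ≤ b := hb
    have h1a : (0:ℝ) < 1 + c * a := by nlinarith
    have h1b : (0:ℝ) < 1 + c * b := by nlinarith
    have hka : (0:ℝ) < (1 + c * a) ^ (-(1 : ℝ) / 2) := Real.rpow_pos_of_pos h1a _
    have hkb : (0:ℝ) < (1 + c * b) ^ (-(1 : ℝ) / 2) := Real.rpow_pos_of_pos h1b _
    have hklt : (1 + c * b) ^ (-(1 : ℝ) / 2) < (1 + c * a) ^ (-(1 : ℝ) / 2) :=
      Real.rpow_lt_rpow_of_neg h1a (by nlinarith) (by norm_num)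
    have habs : ∀ v (hv : (0:ℝ) < (1 + c * v) ^ (-(1 : ℝ) / 2)),
        |(1 + c * v) ^ (-(1 : ℝ) / 2) * m| = (1 + c * v) ^ (-(1 : ℝ) / 2) * |m| := by
      intro v hv
      rw [abs_mul, abs_of_pos hv]
    simp only
    rw [u_abs ((1 + c * a) ^ (-(1:ℝ) / 2) * m), u_abs ((1 + c * b) ^ (-(1:ℝ) / 2) * m),
      habs a hka, habs b hkb]
    have hm' : 0 < |m| := abs_pos.2 hm
    exact g_strictAntiOn
      (Set.mem_Ici.2 (by positivity))
      (Set.mem_Ici.2 (by positivity))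
      (by nlinarith)
  constructor
  · rcases eq_or_ne m 0 with rfl | hm
    · intro a _ b _ _; simp
    · exact (key m hm).monotoneOn
  · exact key m
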